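/- Let (X,d) be a sequentially Yoneda-complete T1 bounded quasi-metric space and let K, L ∈ K_0(X). If K* ⊑ L* in CBX, then L ⊆ K ⊆ cl_{τ_d}(L), where cl_{τ_d}(L) is the closure of L in the topology τ_d. -/

import Mathlib

open scoped NNReal

/-! Generic sequence notions for an arbitrary "distance" function `ρ`. -/

def IsCauchySeq {α : Type _} (ρ : α → α → ℝ) (u : ℕ → α) : Prop :=
  ∀ ε : ℝ, 0 < ε → ∃ N, ∀ n m, N ≤ n → n ≤ m → ρ (u n) (u m) < ε

def IsBiCauchySeq {α : Type _} (ρ : α → α → ℝ) (u : ℕ → α) : Prop :=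
  ∀ ε : ℝ, 0 < ε → ∃ N, ∀ n m, N ≤ n → N ≤ m → ρ (u n) (u m) < ε

/-- `sup_{m ≥ n} ρ (u m) y`. -/
noncomputable def supTail {α : Type _} (ρ : α → α → ℝ) (u : ℕ → α) (y : α) (n : ℕ) : ℝ :=
  sSup {t | ∃ m, n ≤ m ∧ t = ρ (u m) y}

/-- `x` is a Yoneda limit of `u`:  `ρ x y = inf_n sup_{m ≥ n} ρ (u m) y` for all `y`. -/
def IsYonedaLim {α : Type _} (ρ : α → α → ℝ) (u : ℕ → α) (x : α) : Prop :=
  ∀ y, ρ x y = sInf (Set.range (supTail ρ u y))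

def SeqYonedaCompleteD {α : Type _} (ρ : α → α → ℝ) : Prop :=
  ∀ u, IsCauchySeq ρ u → ∃ x, IsYonedaLim ρ u x

/-- Smyth completeness: every Cauchy sequence converges in the symmetrized metric. -/
def SmythCompleteD {α : Type _} (ρ : α → α → ℝ) : Prop :=
  ∀ u, IsCauchySeq ρ u → ∃ x, ∀ ε : ℝ, 0 < ε → ∃ N, ∀ n, N ≤ n →
    max (ρ x (u n)) (ρ (u n) x) < ε

/-- `inf_{m ≥ n} ρ e (u m)`. -/
noncomputable def infTail {α : Type _} (ρ : α → α → ℝ) (u : ℕ → α) (e : α) (n : ℕ) : ℝ :=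
  sInf {t | ∃ m, n ≤ m ∧ t = ρ e (u m)}

/-- `e` is a finite point: for every Cauchy sequence `u` with Yoneda limit `x`,
`ρ e x = sup_n inf_{m ≥ n} ρ e (u m)`. -/
def IsFinitePoint {α : Type _} (ρ : α → α → ℝ) (e : α) : Prop :=
  ∀ u x, IsCauchySeq ρ u → IsYonedaLim ρ u x →
    ρ e x = sSup (Set.range (infTail ρ u e))

/-- ω-algebraic: a countable set of finite points such that every point is a Yoneda limit
of a Cauchy sequence of points from it. -/
def OmegaAlgebraicD {α : Type _} (ρ : α → α → ℝ) : Prop :=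
  ∃ X0 : Set α, X0.Countable ∧ (∀ e ∈ X0, IsFinitePoint ρ e) ∧
    ∀ x, ∃ u : ℕ → α, (∀ n, u n ∈ X0) ∧ IsCauchySeq ρ u ∧ IsYonedaLim ρ u x

/-- A quasi-metric on `X`. -/
structure QuasiMetric (X : Type _) : Type _ where
  d : X → X → ℝ
  nonneg : ∀ x y, 0 ≤ d x y
  triangle : ∀ x y z, d x z ≤ d x y + d y z
  eq_iff : ∀ x y, x = y ↔ d x y = 0 ∧ d y x = 0

/-- Formal balls over `X`. -/
abbrev FB (X : Type _) := X × ℝ≥0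

/-- Nonempty finite subsets of the space of formal balls. -/
def PFin (X : Type _) : Type _ := {F : Set (FB X) // F.Finite ∧ F.Nonempty}

namespace QuasiMetric

variable {X : Type _} (Q : QuasiMetric X)

def IsT1 : Prop := ∀ x y, Q.d x y = 0 → x = y

def Bounded : Prop := ∃ C : ℝ, ∀ x y, Q.d x y ≤ C

def ball (x : X) (ε : ℝ) : Set X := {y | Q.d x y < ε}

/-- The topology `τ_d` induced by the quasi-metric. -/
def tau : TopologicalSpace X :=
  TopologicalSpace.generateFrom {s | ∃ x ε, 0 < ε ∧ s = Q.ball x ε}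

def dstar (x y : X) : ℝ := max (Q.d x y) (Q.d y x)

def SeqYonedaComplete : Prop := SeqYonedaCompleteD Q.d

def SmythComplete : Prop := SmythCompleteD Q.d

/-- `K` is `d⁻¹`-precompact. -/
def dInvPrecompact (K : Set X) : Prop :=
  ∀ ε : ℝ, 0 < ε → ∃ F : Set X, F.Finite ∧ F ⊆ K ∧ ∀ k ∈ K, ∃ x ∈ F, Q.d k x < ε

/-- The nonempty compact subsets of `(X, τ_d)`. -/
def K0 : Set (Set X) := {K | K.Nonempty ∧ @IsCompact X Q.tau K}

noncomputable def dPtSet (x : X) (B : Set X) : ℝ := sInf {t | ∃ b ∈ B, t = Q.d x b}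

noncomputable def dSetPt (A : Set X) (y : X) : ℝ := sInf {t | ∃ a ∈ A, t = Q.d a y}

/-- The Hausdorff quasi-metric. -/
noncomputable def Hd (A B : Set X) : ℝ :=
  max (sSup {t | ∃ b ∈ B, t = Q.dSetPt A b}) (sSup {t | ∃ a ∈ A, t = Q.dPtSet a B})

/-- Order on formal balls: `(x,r) ⊑ (y,s)  ↔  d x y ≤ r - s`. -/
def ble (a b : FB X) : Prop := Q.d a.1 b.1 ≤ (a.2 : ℝ) - (b.2 : ℝ)

/-- Auxiliary relation: `(x,r) ≺ (y,s)  ↔  d x y < r - s`. -/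
def blt (a b : FB X) : Prop := Q.d a.1 b.1 < (a.2 : ℝ) - (b.2 : ℝ)

def iota (x : X) : FB X := (x, 0)

/-- The quasi-metric `q` on formal balls. -/
noncomputable def q (a b : FB X) : ℝ :=
  max (Q.d a.1 b.1) |(a.2 : ℝ) - (b.2 : ℝ)| + ((b.2 : ℝ) - (a.2 : ℝ))

/-- The Egli–Milner relation `≺_EM` on nonempty finite sets of formal balls. -/
def em (F G : PFin X) : Prop :=
  (∀ b ∈ G.1, ∃ a ∈ F.1, Q.blt a b) ∧ (∀ a ∈ F.1, ∃ b ∈ G.1, Q.blt a b)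

/-- The non-strict Egli–Milner relation `⊑_EM`. -/
def emLE (F G : PFin X) : Prop :=
  (∀ a ∈ F.1, ∃ b ∈ G.1, Q.ble a b) ∧ (∀ b ∈ G.1, ∃ a ∈ F.1, Q.ble a b)

/-- `rF = max { r : (x,r) ∈ F }`. -/
noncomputable def rF (F : PFin X) : ℝ := sSup {t | ∃ p ∈ F.1, t = (p.2 : ℝ)}

/-- `δ(F,G) = min {(r-s) - d x y : (x,r) ∈ F, (y,s) ∈ G, (x,r) ≺ (y,s)}`. -/
noncomputable def delta (F G : PFin X) : ℝ :=
  sInf {t | ∃ a ∈ F.1, ∃ b ∈ G.1, Q.blt a b ∧ t = ((a.2 : ℝ) - (b.2 : ℝ)) - Q.d a.1 b.1}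

/-- The Hausdorff quasi-metric `H_q` on `P_fin(BX)` induced by `q`. -/
noncomputable def Hq (F G : PFin X) : ℝ :=
  max (sSup {t | ∃ a ∈ F.1, t = sInf {s | ∃ b ∈ G.1, s = Q.q a b}})
      (sSup {t | ∃ b ∈ G.1, t = sInf {s | ∃ a ∈ F.1, s = Q.q a b}})

/-- ω-chains in `(P_fin(BX), ≺_EM)`; `c n` plays the role of `F_{n+1}`. -/
def Chain : Type _ := {c : ℕ → PFin X // ∀ n, Q.em (c n) (c (n + 1))}

def chainLE (c c' : Q.Chain) : Prop := ∀ n, ∃ m, Q.em (c.1 n) (c'.1 m)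

def chainEquiv (c c' : Q.Chain) : Prop := Q.chainLE c c' ∧ Q.chainLE c' c

lemma blt_trans {a b c : FB X} (h1 : Q.blt a b) (h2 : Q.blt b c) : Q.blt a c := by
  have h3 := Q.triangle a.1 b.1 c.1
  unfold blt at h1 h2 ⊢
  linarith

lemma em_trans {F G H : PFin X} (h1 : Q.em F G) (h2 : Q.em G H) : Q.em F H := by
  constructor
  · intro b hb
    obtain ⟨a, ha, hab⟩ := h2.1 b hb
    obtain ⟨a', ha', h'⟩ := h1.1 a ha
    exact ⟨a', ha', Q.blt_trans h' hab⟩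
  · intro a ha
    obtain ⟨b, hb, hab⟩ := h1.2 a ha
    obtain ⟨c, hc, hbc⟩ := h2.2 b hb
    exact ⟨c, hc, Q.blt_trans hab hbc⟩

lemma chainLE_refl (c : Q.Chain) : Q.chainLE c c := fun n => ⟨n + 1, c.2 n⟩

lemma chainLE_trans {a b c : Q.Chain} (h1 : Q.chainLE a b) (h2 : Q.chainLE b c) :
    Q.chainLE a c := by
  intro n
  obtain ⟨m, hm⟩ := h1 n
  obtain ⟨k, hk⟩ := h2 m
  exact ⟨k, Q.em_trans hm hk⟩

def chainSetoid : Setoid Q.Chain where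
  r := Q.chainEquiv
  iseqv := ⟨fun c => ⟨Q.chainLE_refl c, Q.chainLE_refl c⟩,
    fun h => ⟨h.2, h.1⟩,
    fun h1 h2 => ⟨Q.chainLE_trans h1.1 h2.1, Q.chainLE_trans h2.2 h1.2⟩⟩

/-- The ω-Plotkin domain `CBX`: equivalence classes of ω-chains in `(P_fin(BX), ≺_EM)`. -/
def CBX : Type _ := Quotient Q.chainSetoid

/-- The partial order of `CBX`. -/
def cbLE : Q.CBX → Q.CBX → Prop :=
  Quotient.lift₂ Q.chainLE (by
    intro a b a' b' ha hb
    have ha' : Q.chainEquiv a a' := ha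
    have hb' : Q.chainEquiv b b' := hb
    exact propext ⟨fun h => Q.chainLE_trans (Q.chainLE_trans ha'.2 h) hb'.1,
      fun h => Q.chainLE_trans (Q.chainLE_trans ha'.1 h) hb'.2⟩)

def chainWB (c c' : Q.Chain) : Prop := ∃ m, ∀ n, Q.em (c.1 n) (c'.1 m)

/-- The way-below relation of `CBX`. -/
def cbWB : Q.CBX → Q.CBX → Prop :=
  Quotient.lift₂ Q.chainWB (by
    intro a b a' b' ha hb
    have ha' : Q.chainEquiv a a' := ha
    have hb' : Q.chainEquiv b b' := hb
    apply propext
    constructor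
    · rintro ⟨m, hm⟩
      obtain ⟨k, hk⟩ := hb'.1 m
      refine ⟨k, fun n => ?_⟩
      obtain ⟨p, hp⟩ := ha'.2 n
      exact Q.em_trans hp (Q.em_trans (hm p) hk)
    · rintro ⟨m, hm⟩
      obtain ⟨k, hk⟩ := hb'.2 m
      refine ⟨k, fun n => ?_⟩
      obtain ⟨p, hp⟩ := ha'.1 n
      exact Q.em_trans hp (Q.em_trans (hm p) hk))

/-- The Scott topology of `CBX`, generated by the sets `↟I`. -/
def scottTop : TopologicalSpace Q.CBX :=
  TopologicalSpace.generateFrom {s | ∃ I : Q.CBX, s = {J | Q.cbWB I J}}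

def upSet (F : PFin X) : Set (FB X) := {b | ∃ a ∈ F.1, Q.ble a b}

/-- `I⁺ = ⋂_n ↑F_n` for a representing chain. -/
def Iplus (c : Q.Chain) : Set (FB X) := ⋂ n, Q.upSet (c.1 n)

noncomputable def IplusQ (I : Q.CBX) : Set (FB X) := Q.Iplus (Quotient.out I)

/-- `r̄ I = inf { rF : F occurs in some chain representing I }`. -/
noncomputable def rbar (I : Q.CBX) : ℝ :=
  sInf {t | ∃ c : Q.Chain, Quotient.mk Q.chainSetoid c = I ∧ ∃ n, t = rF (c.1 n)}

/-- `c` is a standard representation of `K`: `c n` (playing the role of `F_{n+1}`) is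
`{(x_i^j, 1/(n+1)) : 1 ≤ j ≤ n+1, 1 ≤ i ≤ m_j}` where the `x_i^j ∈ K` satisfy
`∀ y ∈ K, ∃ i, d (x_i^j) y < 1/(2 j²)`. -/
def IsStdRep (K : Set X) (c : Q.Chain) : Prop :=
  ∃ (m : ℕ → ℕ) (x : ℕ → ℕ → X),
    (∀ j i, 1 ≤ j → 1 ≤ i → i ≤ m j → x j i ∈ K) ∧
    (∀ j, 1 ≤ j → ∀ y ∈ K, ∃ i, 1 ≤ i ∧ i ≤ m j ∧ Q.d (x j i) y < 1 / (2 * (j : ℝ) ^ 2)) ∧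
    (∀ n : ℕ, (c.1 n).1 =
      {p : FB X | ∃ j i, 1 ≤ j ∧ j ≤ n + 1 ∧ 1 ≤ i ∧ i ≤ m j ∧
        p = (x j i, ((n : ℝ≥0) + 1)⁻¹)})

/-- `D` on representing chains: `sup_n inf_m H_q(F_n, G_m)`. -/
noncomputable def Dchain (c c' : Q.Chain) : ℝ :=
  sSup {t | ∃ n, t = sInf {s | ∃ m, s = Q.Hq (c.1 n) (c'.1 m)}}

/-- The quasi-metric `D` on `CBX`. -/
noncomputable def D (I J : Q.CBX) : ℝ := Q.Dchain (Quotient.out I) (Quotient.out J)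

/-- The topology induced by `D` on `CBX`. -/
def DTop : TopologicalSpace Q.CBX :=
  TopologicalSpace.generateFrom
    {s | ∃ (I : Q.CBX) (ε : ℝ), 0 < ε ∧ s = {J | Q.D I J < ε}}

/-- The hyperspace `K_0(X)` as a type. -/
def K0T : Type _ := {K : Set X // K.Nonempty ∧ @IsCompact X Q.tau K}

/-- The Vietoris topology on `K_0(X)`. -/
def vietoris : TopologicalSpace Q.K0T :=
  TopologicalSpace.generateFrom
    ({s | ∃ V : Set X, @IsOpen X Q.tau V ∧ s = {K : Q.K0T | (K.1 ∩ V).Nonempty}} ∪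
     {s | ∃ V : Set X, @IsOpen X Q.tau V ∧ s = {K : Q.K0T | K.1 ⊆ V}})

/-- The topology of the Hausdorff quasi-metric on `K_0(X)`. -/
def hdTop : TopologicalSpace Q.K0T :=
  TopologicalSpace.generateFrom
    {s | ∃ (K : Q.K0T) (ε : ℝ), 0 < ε ∧ s = {L : Q.K0T | Q.Hd K.1 L.1 < ε}}

/-- Round ideals of `(P_fin(BX), ≺_EM)`. -/
def IsRoundIdeal (I : Set (PFin X)) : Prop :=
  I.Nonempty ∧ (∀ F G : PFin X, Q.em F G → G ∈ I → F ∈ I) ∧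
  (∀ F ∈ I, ∀ G ∈ I, ∃ H ∈ I, Q.em F H ∧ Q.em G H)

end QuasiMetric

/-! If `F_n ≺ G_m` then the radii force `n < m`, so `G_m` contains a `1/(n+1)`-net of `L`, and
`F_n` one of `K`. The Egli–Milner relation then approximates every point of `L` from the left,
up to `O(1/n)`, by points of `K`; and every point `k ∈ K` from the left by points of `K` that are
`d`-close to `L`. In the compact set `K` the approximants have a cluster point, which by T1 is
the approximated point itself: this gives `L ⊆ K`, and points of `L` `d`-close to each `k ∈ K`. -/

open Filter Topology

namespace QuasiMetric

variable {X : Type} (Q : QuasiMetric X)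

lemma d_self (x : X) : Q.d x x = 0 := ((Q.eq_iff x x).mp rfl).1

lemma ball_subset_ball' {x y : X} {ε₁ ε₂ : ℝ} (h : ε₁ + Q.d y x ≤ ε₂) :
    Q.ball x ε₁ ⊆ Q.ball y ε₂ := fun z hz => by
  have := Q.triangle y x z
  simp only [ball, Set.mem_ofPred_eq] at hz ⊢
  linarith

lemma isTopologicalBasis_balls :
    @TopologicalSpace.IsTopologicalBasis X Q.tau {s | ∃ x ε, 0 < ε ∧ s = Q.ball x ε} := by
  let := Q.tau
  refine ⟨?_, ?_, rfl⟩
  · rintro _ ⟨x₁, ε₁, -, rfl⟩ _ ⟨x₂, ε₂, -, rfl⟩ y ⟨hy₁, hy₂⟩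
    have h₁ : 0 < ε₁ - Q.d x₁ y := sub_pos.2 hy₁
    have h₂ : 0 < ε₂ - Q.d x₂ y := sub_pos.2 hy₂
    refine ⟨Q.ball y (min (ε₁ - Q.d x₁ y) (ε₂ - Q.d x₂ y)), ⟨y, _, lt_min h₁ h₂, rfl⟩,
      by simp [ball, Q.d_self, h₁, h₂], fun z hz => ⟨?_, ?_⟩⟩
    · exact Q.ball_subset_ball' (by linarith [min_le_left (ε₁ - Q.d x₁ y) (ε₂ - Q.d x₂ y)]) hz
    · exact Q.ball_subset_ball' (by linarith [min_le_right (ε₁ - Q.d x₁ y) (ε₂ - Q.d x₂ y)]) hz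
  · exact Set.eq_univ_of_forall fun x =>
      ⟨Q.ball x 1, ⟨x, 1, one_pos, rfl⟩, by simp [ball, Q.d_self]⟩

lemma nhds_basis_ball (x : X) :
    (@nhds X Q.tau x).HasBasis (fun ε : ℝ => 0 < ε) (Q.ball x) := by
  let := Q.tau
  refine Q.isTopologicalBasis_balls.nhds_hasBasis.to_hasBasis ?_ ?_
  · rintro _ ⟨⟨y, ε, -, rfl⟩, hx⟩
    exact ⟨ε - Q.d y x, sub_pos.2 hx, Q.ball_subset_ball' (by linarith)⟩
  · intro ε hε
    exact ⟨Q.ball x ε, ⟨⟨x, ε, hε, rfl⟩, by simp [ball, Q.d_self, hε]⟩, subset_rfl⟩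

lemma frequently_d_lt_of_mapClusterPt {ι : Type*} {F : Filter ι} {w : ι → X} {z : X}
    (hz : @MapClusterPt X Q.tau ι z F w) {ε : ℝ} (hε : 0 < ε) :
    ∃ᶠ i in F, Q.d z (w i) < ε := by
  let := Q.tau
  exact mapClusterPt_iff_frequently.1 hz _ ((Q.nhds_basis_ball z).mem_of_mem hε)

lemma eq_of_mapClusterPt_of_tendsto_d (hT1 : Q.IsT1) {ι : Type*} {F : Filter ι}
    {w : ι → X} {y z : X} (hz : @MapClusterPt X Q.tau ι z F w)
    (hy : Tendsto (fun i => Q.d (w i) y) F (𝓝 0)) : z = y := by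
  refine hT1 z y (le_antisymm (le_of_forall_pos_lt_add fun ε hε => ?_) (Q.nonneg z y))
  have hε2 : 0 < ε / 2 := half_pos hε
  obtain ⟨i, hzi, hiy⟩ := ((Q.frequently_d_lt_of_mapClusterPt hz hε2).and_eventually
    (hy.eventually (gt_mem_nhds hε2))).exists
  linarith [Q.triangle z (w i) y]

lemma mem_and_mapClusterPt_of_isCompact (hT1 : Q.IsT1) {ι : Type*} {F : Filter ι} [F.NeBot]
    {S : Set X} (hS : @IsCompact X Q.tau S) {w : ι → X} (hw : ∀ i, w i ∈ S) {y : X}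
    (hy : Tendsto (fun i => Q.d (w i) y) F (𝓝 0)) : y ∈ S ∧ @MapClusterPt X Q.tau ι y F w := by
  let := Q.tau
  obtain ⟨z, hzS, hz⟩ := hS.exists_mapClusterPt (f := F) (tendsto_principal.2 (.of_forall hw))
  obtain rfl := Q.eq_of_mapClusterPt_of_tendsto_d hT1 hz hy
  exact ⟨hzS, hz⟩

lemma mem_closure_of_forall_exists_d_lt {S : Set X} {x : X}
    (h : ∀ ε > 0, ∃ y ∈ S, Q.d x y < ε) : x ∈ @closure X Q.tau S := by
  let := Q.tau
  exact (mem_closure_iff_nhds_basis (Q.nhds_basis_ball x)).2 h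

lemma blt.d_lt {a b : FB X} (h : Q.blt a b) : Q.d a.1 b.1 < a.2 := by
  unfold blt at h
  linarith [b.2.coe_nonneg]

lemma blt.snd_lt {a b : FB X} (h : Q.blt a b) : (b.2 : ℝ) < a.2 := by
  unfold blt at h
  linarith [Q.nonneg a.1 b.1]

namespace IsStdRep

variable {Q} {K : Set X} {c : Q.Chain}

lemma fst_mem (hc : Q.IsStdRep K c) {n : ℕ} {a : FB X} (ha : a ∈ (c.1 n).1) : a.1 ∈ K := by
  obtain ⟨m, x, hx, -, hcn⟩ := hc
  rw [hcn n] at ha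
  obtain ⟨j, i, hj, -, hi, him, rfl⟩ := ha
  exact hx j i hj hi him

lemma snd_eq (hc : Q.IsStdRep K c) {n : ℕ} {a : FB X} (ha : a ∈ (c.1 n).1) :
    (a.2 : ℝ) = 1 / ((n : ℝ) + 1) := by
  obtain ⟨m, x, -, -, hcn⟩ := hc
  rw [hcn n] at ha
  obtain ⟨j, i, -, -, -, -, rfl⟩ := ha
  push_cast
  rw [one_div]

/-- The `(n+1)`-st net of `K` occurs in every `F_m` with `m ≥ n`. -/
lemma exists_mem_d_lt (hc : Q.IsStdRep K c) {n m : ℕ} (hnm : n ≤ m) {y : X} (hy : y ∈ K) :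
    ∃ a ∈ (c.1 m).1, Q.d a.1 y < 1 / ((n : ℝ) + 1) := by
  obtain ⟨k, x, -, hnet, hcm⟩ := hc
  obtain ⟨i, hi, hik, hxy⟩ := hnet (n + 1) (Nat.le_add_left 1 n) y hy
  refine ⟨(x (n + 1) i, ((m : ℝ≥0) + 1)⁻¹), ?_, lt_of_lt_of_le hxy ?_⟩
  · rw [hcm m]
    exact ⟨n + 1, i, Nat.le_add_left 1 n, by omega, hi, hik, rfl⟩
  · push_cast
    gcongr
    nlinarith [(n.cast_nonneg : (0 : ℝ) ≤ n)]

lemma lt_of_em {L : Set X} {c' : Q.Chain} (hc : Q.IsStdRep K c) (hc' : Q.IsStdRep L c')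
    {n m : ℕ} (h : Q.em (c.1 n) (c'.1 m)) : n < m := by
  obtain ⟨b, hb⟩ := (c'.1 m).2.2
  obtain ⟨a, ha, hab⟩ := h.1 b hb
  have := hab.snd_lt
  rw [hc.snd_eq ha, hc'.snd_eq hb] at this
  rw [one_div_lt_one_div (by positivity) (by positivity)] at this
  exact_mod_cast (by linarith : (n : ℝ) < m)

variable {L : Set X} {cK cL : Q.Chain}

lemma exists_d_lt_of_chainLE_of_mem_right (hcK : Q.IsStdRep K cK) (hcL : Q.IsStdRep L cL)
    (hle : Q.chainLE cK cL) {y : X} (hy : y ∈ L) (n : ℕ) :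
    ∃ w ∈ K, Q.d w y < 2 * (1 / ((n : ℝ) + 1)) := by
  obtain ⟨m, hm⟩ := hle n
  obtain ⟨b, hb, hby⟩ := hcL.exists_mem_d_lt (hcK.lt_of_em hcL hm).le hy
  obtain ⟨a, ha, hab⟩ := hm.1 b hb
  have hab' := hab.d_lt
  rw [hcK.snd_eq ha] at hab'
  refine ⟨a.1, hcK.fst_mem ha, ?_⟩
  linarith [Q.triangle a.1 b.1 y]

lemma exists_d_lt_of_chainLE_of_mem_left (hcK : Q.IsStdRep K cK) (hcL : Q.IsStdRep L cL)
    (hle : Q.chainLE cK cL) {k : X} (hk : k ∈ K) (n : ℕ) :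
    ∃ e ∈ K, Q.d e k < 1 / ((n : ℝ) + 1) ∧ ∃ l ∈ L, Q.d e l < 1 / ((n : ℝ) + 1) := by
  obtain ⟨a, ha, hak⟩ := hcK.exists_mem_d_lt le_rfl hk
  obtain ⟨m, hm⟩ := hle n
  obtain ⟨b, hb, hab⟩ := hm.2 a ha
  have hab' := hab.d_lt
  rw [hcK.snd_eq ha] at hab'
  exact ⟨a.1, hcK.fst_mem ha, hak, b.1, hcL.fst_mem hb, hab'⟩

end IsStdRep

end QuasiMetric

theorem stmt6_general {X : Type} (Q : QuasiMetric X) (hT1 : Q.IsT1)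
    (K L : Set X) (hK : K ∈ Q.K0)
    (cK cL : Q.Chain) (hcK : Q.IsStdRep K cK) (hcL : Q.IsStdRep L cL)
    (hle : Q.cbLE (Quotient.mk Q.chainSetoid cK) (Quotient.mk Q.chainSetoid cL)) :
    L ⊆ K ∧ K ⊆ @closure X Q.tau L := by
  have hle' : Q.chainLE cK cL := hle
  have hlim : Tendsto (fun n : ℕ => 1 / ((n : ℝ) + 1)) atTop (𝓝 0) :=
    tendsto_one_div_add_atTop_nhds_zero_nat
  refine ⟨fun y hy => ?_, fun k hk => ?_⟩
  · choose w hwK hwy using hcK.exists_d_lt_of_chainLE_of_mem_right hcL hle' hy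
    have hwy' : Tendsto (fun n => Q.d (w n) y) atTop (𝓝 0) :=
      squeeze_zero (fun n => Q.nonneg _ _) (fun n => (hwy n).le) (by simpa using hlim.const_mul 2)
    exact (Q.mem_and_mapClusterPt_of_isCompact hT1 hK.2 hwK hwy').1
  · choose e heK hek l hlL hel using hcK.exists_d_lt_of_chainLE_of_mem_left hcL hle' hk
    have hek' : Tendsto (fun n => Q.d (e n) k) atTop (𝓝 0) :=
      squeeze_zero (fun n => Q.nonneg _ _) (fun n => (hek n).le) hlim
    have hk_cluster := (Q.mem_and_mapClusterPt_of_isCompact hT1 hK.2 heK hek').2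
    refine Q.mem_closure_of_forall_exists_d_lt fun ε hε => ?_
    have hfreq := Q.frequently_d_lt_of_mapClusterPt hk_cluster (half_pos hε)
    obtain ⟨n, hkn, hn⟩ :=
      (hfreq.and_eventually (hlim.eventually (gt_mem_nhds (half_pos hε)))).exists
    exact ⟨l n, hlL n, by linarith [Q.triangle k (e n) (l n), hel n]⟩

/-- `K* ⊑ L*` in `CBX` implies `L ⊆ K ⊆ cl_{τ_d}(L)`. -/
theorem stmt6 {X : Type} (Q : QuasiMetric X) (hT1 : Q.IsT1) (hB : Q.Bounded)
    (hY : Q.SeqYonedaComplete) (K L : Set X) (hK : K ∈ Q.K0) (hL : L ∈ Q.K0)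
    (cK cL : Q.Chain) (hcK : Q.IsStdRep K cK) (hcL : Q.IsStdRep L cL)
    (hle : Q.cbLE (Quotient.mk Q.chainSetoid cK) (Quotient.mk Q.chainSetoid cL)) :
    L ⊆ K ∧ K ⊆ @closure X Q.tau L :=
  stmt6_general Q hT1 K L hK cK cL hcK hcL hle
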